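/- arXiv:2308.04747 — 3 statements merged into one kernel-verified Lean document; each statement's English description precedes it below -/
import Mathlib

section
/- Let R be an associative unital ring, viewed as a ternary ring via t(a,b,c)=a*b+c and q(a,b,c)=c-a*b. A subset I of R containing 0 is closed under the Chajda–Halaš operations (i.e., for all a₁,a₂,a₃ ∈ R and h₁,h₂,h₃ ∈ I, we have τ₁(a₁,h₁) ∈ I, τ₂(a₁,a₂,a₃,h₁) ∈ I, and τ₃(a₁,a₂,a₃,h₁,h₂,h₃) ∈ I, where τ₁(x,y)=q(1,t(1,x,y),x), τ₂(x₁,x₂,x₃,y)=q(1,x₃,q(x₁,x₂,t(1,t(x₁,x₂,x₃),y))), τ₃(x₁,x₂,x₃,y₁,y₂,y₃)=q(1,t(x₁,x₂,x₃),t(t(1,x₁,y₁),t(1,x₂,y₂),t(1,x₃,y₃)))) if and only if I is a two-sided ideal of R as a ring. -/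
def tR {R : Type*} [Ring R] (a b c : R) : R := a * b + c
def qR {R : Type*} [Ring R] (a b c : R) : R := c - a * b

theorem stmt9 {R : Type*} [Ring R] (I : Set R) (h0 : (0 : R) ∈ I) :
    (∀ a₁ a₂ a₃ : R, ∀ h₁ ∈ I, ∀ h₂ ∈ I, ∀ h₃ ∈ I,
        qR 1 (tR 1 a₁ h₁) a₁ ∈ I ∧
        qR 1 a₃ (qR a₁ a₂ (tR 1 (tR a₁ a₂ a₃) h₁)) ∈ I ∧
        qR 1 (tR a₁ a₂ a₃) (tR (tR 1 a₁ h₁) (tR 1 a₂ h₂) (tR 1 a₃ h₃)) ∈ I)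
    ↔ ∃ J : TwoSidedIdeal R, (J : Set R) = I := by
  simp only [tR, qR]
  constructor
  · intro H
    have neg_mem : ∀ {x : R}, x ∈ I → -x ∈ I := by
      intro x hx
      have := (H x 0 0 x hx 0 h0 0 h0).1
      simpa using this
    have add_mem : ∀ {x y : R}, x ∈ I → y ∈ I → x + y ∈ I := by
      intro x y hx hy
      have := (H 1 0 0 0 h0 x hx y hy).2.2
      simpa using this
    have mull : ∀ {x y : R}, y ∈ I → x * y ∈ I := by
      intro x y hy
      have := (H x 0 0 0 h0 y hy 0 h0).2.2
      simpa using this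
    have mulr : ∀ {x y : R}, x ∈ I → x * y ∈ I := by
      intro x y hx
      have := (H 0 y 0 x hx 0 h0 0 h0).2.2
      simpa using this
    exact ⟨TwoSidedIdeal.mk' I h0 add_mem neg_mem mull mulr,
      TwoSidedIdeal.coe_mk' ..⟩
  · rintro ⟨J, rfl⟩ a₁ a₂ a₃ h₁ hh₁ h₂ hh₂ h₃ hh₃
    refine ⟨?_, ?_, ?_⟩
    · simpa using J.neg_mem hh₁
    · have : 1 * (a₁ * a₂ + a₃) + h₁ - a₁ * a₂ - 1 * a₃ = h₁ := by noncomm_ring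
      rw [this]; exact hh₁
    · have key : (1 * a₁ + h₁) * (1 * a₂ + h₂) + (1 * a₃ + h₃) - 1 * (a₁ * a₂ + a₃)
          = a₁ * h₂ + h₁ * a₂ + h₁ * h₂ + h₃ := by noncomm_ring
      rw [key]
      exact J.add_mem (J.add_mem (J.add_mem (J.mul_mem_left _ _ hh₂)
        (J.mul_mem_right _ _ hh₁)) (J.mul_mem_right _ _ hh₁)) hh₃
end

section
/- Let R be a commutative ring that is a principal ideal domain, and let p : R → S be an injective homomorphism of commutative rings satisfying the ideal extension property (for every ideal I of R there is an ideal J of S with p⁻¹(J) = I). Then p is pure as a morphism of R-modules: for every R-module M, the map M → M ⊗_R S, m ↦ m ⊗ 1, is injective. -/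
/-!
Purity is tested one element at a time, and an element of `M` dying in `M ⊗ S` already dies
in `N ⊗ S` for some finitely generated submodule `N` containing it; so `M` may be assumed
finitely generated. Over a PID such an `M` is a finite sum of cyclic modules `R ⧸ I` (the free
part included, as `R ≅ R ⧸ 0`), and `(R ⧸ I) ⊗ S ≅ S ⧸ IS`, so injectivity on
`R ⧸ I` says `IS ∩ R = I`. This holds because `I = J ∩ R` for some ideal `J ⊇ IS`.
-/

open TensorProduct

section Naturality

variable {R M N P : Type*} [CommRing R] [AddCommGroup M] [Module R M] [AddCommGroup N]
  [Module R N] [AddCommGroup P] [Module R P] (s : P)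

theorem injective_mk_flip_of_linearEquiv (e : M ≃ₗ[R] N)
    (hN : Function.Injective ((TensorProduct.mk R N P).flip s)) :
    Function.Injective ((TensorProduct.mk R M P).flip s) := by
  rw [injective_iff_map_eq_zero] at hN ⊢
  intro m hm
  refine e.injective (hN (e m) ?_ |>.trans e.map_zero.symm)
  simpa using congrArg (e.toLinearMap.rTensor P) hm

theorem injective_mk_flip_prod (hM : Function.Injective ((TensorProduct.mk R M P).flip s))
    (hN : Function.Injective ((TensorProduct.mk R N P).flip s)) :
    Function.Injective ((TensorProduct.mk R (M × N) P).flip s) := by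
  rw [injective_iff_map_eq_zero] at hM hN ⊢
  intro x hx
  refine Prod.ext (hM x.1 ?_) (hN x.2 ?_)
  · simpa using congrArg ((LinearMap.fst R M N).rTensor P) hx
  · simpa using congrArg ((LinearMap.snd R M N).rTensor P) hx

theorem injective_mk_flip_pi {ι : Type*} {N : ι → Type*} [∀ i, AddCommGroup (N i)]
    [∀ i, Module R (N i)] (hN : ∀ i, Function.Injective ((TensorProduct.mk R (N i) P).flip s)) :
    Function.Injective ((TensorProduct.mk R (∀ i, N i) P).flip s) := by
  simp_rw [injective_iff_map_eq_zero] at hN ⊢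
  intro x hx
  funext i
  exact hN i (x i) (by simpa using congrArg ((LinearMap.proj i).rTensor P) hx)

end Naturality

theorem injective_mk_flip_of_forall_fg {R M P : Type*} [CommSemiring R] [AddCommMonoid M]
    [Module R M] [AddCommMonoid P] [Module R P] (s : P)
    (h : ∀ N : Submodule R M, N.FG → Function.Injective ((TensorProduct.mk R N P).flip s)) :
    Function.Injective ((TensorProduct.mk R M P).flip s) := by
  intro m₁ m₂ heq
  let N := Submodule.span R {m₁, m₂}
  have hN : N.FG := Submodule.fg_span (Set.toFinite _)
  let x₁ : N := ⟨m₁, Submodule.subset_span (by simp)⟩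
  let x₂ : N := ⟨m₂, Submodule.subset_span (by simp)⟩
  have hx : N.subtype.rTensor P (x₁ ⊗ₜ s) = N.subtype.rTensor P (x₂ ⊗ₜ s) := heq
  obtain ⟨N', hN', _, hx'⟩ := hN.exists_rTensor_fg_inclusion_eq hx
  exact congrArg Subtype.val (h N' hN' hx')

theorem injective_mk_flip_one_quotient {R S : Type*} [CommRing R] [CommRing S] [Algebra R S]
    {I : Ideal R} {J : Ideal S} (hJ : J.comap (algebraMap R S) = I) :
    Function.Injective ((TensorProduct.mk R (R ⧸ I) S).flip 1) := by
  rw [injective_iff_map_eq_zero]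
  intro x hx
  obtain ⟨r, rfl⟩ := Ideal.Quotient.mk_surjective x
  have hr : algebraMap R S r ∈ I.map (algebraMap R S) := by
    have := congrArg (TensorProduct.quotTensorEquivQuotSMul S I) hx
    rwa [LinearMap.flip_apply, TensorProduct.mk_apply, quotTensorEquivQuotSMul_mk_tmul, map_zero,
      Submodule.Quotient.mk_eq_zero, Ideal.smul_top_eq_map, Submodule.restrictScalars_mem,
      Algebra.smul_def, mul_one] at this
  rw [Ideal.Quotient.eq_zero_iff_mem, ← hJ]
  exact Ideal.map_le_iff_le_comap.mpr hJ.ge hr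

theorem injective_mk_flip_one_of_finite {R S : Type*} [CommRing R] [IsDomain R]
    [IsPrincipalIdealRing R] [CommRing S] [Algebra R S]
    (hext : ∀ I : Ideal R, ∃ J : Ideal S, J.comap (algebraMap R S) = I)
    (M : Type*) [AddCommGroup M] [Module R M] [Module.Finite R M] :
    Function.Injective ((TensorProduct.mk R M S).flip 1) := by
  have hquot (I : Ideal R) : Function.Injective ((TensorProduct.mk R (R ⧸ I) S).flip 1) :=
    (hext I).elim fun _ hJ ↦ injective_mk_flip_one_quotient hJ
  have hfree : Function.Injective ((TensorProduct.mk R R S).flip 1) :=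
    injective_mk_flip_of_linearEquiv _ (Submodule.quotEquivOfEqBot ⊥ rfl).symm (hquot ⊥)
  obtain ⟨n, ι, _, p, -, e, ⟨φ⟩⟩ := Module.equiv_free_prod_directSum R M
  refine injective_mk_flip_of_linearEquiv _ φ (injective_mk_flip_prod _ ?_ ?_)
  · exact injective_mk_flip_of_linearEquiv _ (Finsupp.linearEquivFunOnFinite R R (Fin n))
      (injective_mk_flip_pi _ fun _ ↦ hfree)
  · exact injective_mk_flip_of_linearEquiv _ (DirectSum.linearEquivFunOnFintype R ι _)
      (injective_mk_flip_pi _ fun _ ↦ hquot _)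

theorem stmt13_general {R S : Type*} [CommRing R] [IsDomain R] [IsPrincipalIdealRing R]
    [CommRing S] [Algebra R S]
    (hext : ∀ I : Ideal R, ∃ J : Ideal S, Ideal.comap (algebraMap R S) J = I) :
    ∀ (M : Type*) [AddCommGroup M] [Module R M],
      Function.Injective (fun m : M => m ⊗ₜ[R] (1 : S)) := fun _ _ _ ↦
  injective_mk_flip_of_forall_fg 1 fun N hN ↦
    have : Module.Finite R N := Module.Finite.iff_fg.mpr hN
    injective_mk_flip_one_of_finite hext N

theorem stmt13 {R S : Type*} [CommRing R] [IsDomain R] [IsPrincipalIdealRing R]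
    [CommRing S] [Algebra R S]
    (hinj : Function.Injective (algebraMap R S))
    (hext : ∀ I : Ideal R, ∃ J : Ideal S, Ideal.comap (algebraMap R S) J = I) :
    ∀ (M : Type*) [AddCommGroup M] [Module R M],
      Function.Injective (fun m : M => m ⊗ₜ[R] (1 : S)) :=
  stmt13_general hext
end

section
/- Let R and S be commutative rings and p : R → S an injective ring homomorphism such that S is projective as an R-module (via p). If p satisfies the ideal extension property (every ideal of R is the contraction of an ideal of S), then p is pure as a morphism of R-modules. -/
open TensorProduct

theorem stmt14 {R S : Type*} [CommRing R] [CommRing S] [Algebra R S]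
    [Module.Projective R S]
    (hinj : Function.Injective (algebraMap R S))
    (hext : ∀ I : Ideal R, ∃ J : Ideal S, Ideal.comap (algebraMap R S) J = I) :
    ∀ (M : Type*) [AddCommGroup M] [Module R M],
      Function.Injective (fun m : M => m ⊗ₜ[R] (1 : S)) := by
  intro M _ _
  -- dual basis from projectivity
  obtain ⟨s, hs⟩ := Module.projective_def.mp ‹Module.Projective R S›
  -- the trace ideal of 1 : values f 1 for f : S →ₗ[R] R
  let φ : (S →ₗ[R] R) →ₗ[R] R :=
    { toFun := fun f => f 1
      map_add' := fun f g => rfl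
      map_smul' := fun r f => rfl }
  let I : Ideal R := LinearMap.range φ
  obtain ⟨J, hJ⟩ := hext I
  have h1J : (1 : S) ∈ J := by
    have h1 := hs 1
    rw [Finsupp.linearCombination_apply] at h1
    rw [← h1]
    refine Submodule.sum_mem J ?_
    intro y hy
    have hr : (s 1) y ∈ I := ⟨(Finsupp.lapply y).comp s, rfl⟩
    rw [← hJ, Ideal.mem_comap] at hr
    simp only [id_eq]
    rw [Algebra.smul_def]
    exact J.mul_mem_right y hr
  have hI1 : (1 : R) ∈ I := by
    rw [← hJ, Ideal.mem_comap, map_one]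
    exact h1J
  obtain ⟨g, hg⟩ := hI1
  have hg1 : g 1 = 1 := hg
  have hli : Function.LeftInverse
      ((TensorProduct.rid R M) ∘ (LinearMap.lTensor M g))
      (fun m : M => m ⊗ₜ[R] (1 : S)) := by
    intro m
    simp [hg1]
  exact hli.injective
end
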